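/- arXiv:2509.24971 — 2 statements merged into one kernel-verified Lean document; each statement's English description precedes it below -/
import Mathlib

section
/- For λ ∈ (1,2) define R(λ) := ∑_{i=1}^∞ 1/a_i(λ), where a_1(λ) = 1 and a_{i+1}(λ) = ⌈λ·a_i(λ)⌉. Then R(λ) tends to 2 as λ → 2 from the left. -/
open Filter

/-- The sequence `a₁ = 1`, `a_{i+1} = ⌈λ a_i⌉`, indexed from `0`
(so `aSeq lam i` is `a_{i+1}` of the paper). -/
noncomputable def aSeq (lam : ℝ) : ℕ → ℕ
  | 0 => 1
  | i + 1 => ⌈lam * (aSeq lam i : ℝ)⌉₊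

lemma aSeq_lower {lam : ℝ} (h1 : 1 < lam) (i : ℕ) : lam ^ i ≤ (aSeq lam i : ℝ) := by
  induction i with
  | zero => simp [aSeq]
  | succ i ih =>
    have h0 : (0:ℝ) ≤ lam := by linarith
    have h2 : lam * lam ^ i ≤ lam * (aSeq lam i : ℝ) :=
      mul_le_mul_of_nonneg_left ih h0
    calc lam ^ (i+1) = lam * lam ^ i := by ring
      _ ≤ lam * (aSeq lam i : ℝ) := h2
      _ ≤ (⌈lam * (aSeq lam i : ℝ)⌉₊ : ℝ) := Nat.le_ceil _
      _ = (aSeq lam (i+1) : ℝ) := rfl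

lemma aSeq_pos {lam : ℝ} (h1 : 1 < lam) (i : ℕ) : (0:ℝ) < (aSeq lam i : ℝ) := by
  have := aSeq_lower h1 i
  have : (0:ℝ) < lam ^ i := by positivity
  linarith [aSeq_lower h1 i]

lemma aSeq_eq_pow {lam : ℝ} {N : ℕ} (hl : 2 - (1/2:ℝ)^N < lam) (hu : lam ≤ 2) :
    ∀ i ≤ N, aSeq lam i = 2 ^ i := by
  intro i hi
  induction i with
  | zero => rfl
  | succ i ih =>
    have hiN : i ≤ N := Nat.le_of_succ_le hi
    have hieq := ih hiN
    show ⌈lam * (aSeq lam i : ℝ)⌉₊ = 2 ^ (i+1)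
    rw [hieq]
    rw [Nat.ceil_eq_iff (by positivity)]
    have hcast : ((2:ℕ) ^ (i+1) : ℝ) = 2 ^ (i+1) := by push_cast; ring
    have hpow : (2:ℝ)^i * (1/2:ℝ)^N ≤ 1 := by
      have h2 : (2:ℝ)^i ≤ 2^N := pow_le_pow_right₀ (by norm_num) hiN
      have h3 : (0:ℝ) < (2:ℝ)^N := by positivity
      rw [div_pow, one_pow, mul_one_div, div_le_one h3]
      exact h2
    have hc1 : (((2:ℕ)^(i+1) - 1 : ℕ) : ℝ) = 2^(i+1) - 1 := by
      have h1 : 1 ≤ (2:ℕ)^(i+1) := Nat.one_le_two_pow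
      push_cast [h1]
      ring
    have hp : (0:ℝ) < (2:ℝ)^i := by positivity
    have hps : (2:ℝ)^(i+1) = 2 * 2^i := by ring
    have key : (2 - (1/2:ℝ)^N) * 2^i < lam * 2^i := mul_lt_mul_of_pos_right hl hp
    have key2 : lam * 2^i ≤ 2 * 2^i := mul_le_mul_of_nonneg_right hu hp.le
    constructor
    · rw [hc1]
      push_cast
      nlinarith [key, hpow, hps]
    · push_cast
      nlinarith [key2, hps]

lemma aSeq_term_le {lam : ℝ} (h1 : 1 < lam) (i : ℕ) :
    (1:ℝ) / (aSeq lam i) ≤ lam⁻¹ ^ i := by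
  have hp : (0:ℝ) < lam ^ i := by positivity
  calc (1:ℝ) / (aSeq lam i) ≤ 1 / lam ^ i :=
        one_div_le_one_div_of_le hp (aSeq_lower h1 i)
    _ = lam⁻¹ ^ i := by rw [one_div, inv_pow]

lemma aSeq_summable {lam : ℝ} (h1 : 1 < lam) :
    Summable (fun i => (1:ℝ) / (aSeq lam i)) := by
  have hinv0 : (0:ℝ) ≤ lam⁻¹ := by positivity
  have hinv1 : lam⁻¹ < 1 := inv_lt_one_of_one_lt₀ h1
  exact Summable.of_nonneg_of_le (fun i => by positivity) (aSeq_term_le h1)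
    (summable_geometric_of_lt_one hinv0 hinv1)

lemma aSeq_tsum_le {lam : ℝ} (h1 : 1 < lam) :
    ∑' i, (1:ℝ) / (aSeq lam i) ≤ lam / (lam - 1) := by
  have hinv0 : (0:ℝ) ≤ lam⁻¹ := by positivity
  have hinv1 : lam⁻¹ < 1 := inv_lt_one_of_one_lt₀ h1
  have h0 : lam ≠ 0 := by linarith
  have h1' : lam - 1 ≠ 0 := by intro h; linarith [sub_eq_zero.mp h]
  calc ∑' i, (1:ℝ) / (aSeq lam i) ≤ ∑' i, lam⁻¹ ^ i :=
        Summable.tsum_le_tsum (aSeq_term_le h1) (aSeq_summable h1)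
          (summable_geometric_of_lt_one hinv0 hinv1)
    _ = (1 - lam⁻¹)⁻¹ := tsum_geometric_of_lt_one hinv0 hinv1
    _ = lam / (lam - 1) := by field_simp

/-- With `R(λ) := ∑_i 1 / a_i(λ)`, where `a₁(λ) = 1` and
`a_{i+1}(λ) = ⌈λ a_i(λ)⌉`, the quantity `R(λ)` tends to `2` as `λ → 2⁻`
(within the interval `(1, 2)`). -/
theorem stmt6 :
    Tendsto (fun lam : ℝ => ∑' i, (1 : ℝ) / (aSeq lam i))
      (nhdsWithin 2 (Set.Ioo (1 : ℝ) 2)) (nhds 2) := by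
  rw [Metric.tendsto_nhdsWithin_nhds]
  intro ε hε
  obtain ⟨N, hN⟩ := exists_pow_lt_of_lt_one (by linarith : (0:ℝ) < ε/2)
    (by norm_num : (1/2:ℝ) < 1)
  refine ⟨min ((1/2)^N) (min (ε/8) (1/2)), by positivity, ?_⟩
  intro lam hmem hdist
  obtain ⟨hl1, hl2⟩ := hmem
  rw [Real.dist_eq] at hdist ⊢
  have habs : |lam - 2| = 2 - lam := by
    rw [abs_of_neg (by linarith)]; ring
  rw [habs] at hdist
  have hA : 2 - (1/2:ℝ)^N < lam := by
    have := min_le_left ((1/2:ℝ)^N) (min (ε/8) (1/2))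
    linarith
  have hB : (3/2:ℝ) < lam := by
    have h1 := min_le_right ((1/2:ℝ)^N) (min (ε/8) (1/2))
    have h2 := min_le_right (ε/8) (1/2:ℝ)
    linarith
  have hC : 2 - lam < ε/8 := by
    have h1 := min_le_right ((1/2:ℝ)^N) (min (ε/8) (1/2))
    have h2 := min_le_left (ε/8) (1/2:ℝ)
    linarith
  have hup : ∑' i, (1:ℝ) / (aSeq lam i) < 2 + ε/2 := by
    have h3 : lam / (lam - 1) < 2 + ε/2 := by
      rw [div_lt_iff₀ (by linarith)]
      nlinarith
    linarith [aSeq_tsum_le hl1]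
  have heq := aSeq_eq_pow hA hl2.le
  have hsum : ∑ i ∈ Finset.range (N+1), (1:ℝ) / (aSeq lam i)
      = ∑ i ∈ Finset.range (N+1), (1/2:ℝ)^i := by
    refine Finset.sum_congr rfl fun i hi => ?_
    rw [heq i (Nat.lt_succ_iff.mp (Finset.mem_range.mp hi))]
    push_cast
    rw [div_pow, one_pow]
  have hg : ∑ i ∈ Finset.range (N+1), (1/2:ℝ)^i = 2 - (1/2)^N := by
    rw [geom_sum_eq (by norm_num)]
    have hps : (1/2:ℝ)^(N+1) = (1/2)^N * (1/2) := pow_succ _ _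
    rw [hps]; ring
  have hlow : 2 - (1/2:ℝ)^N ≤ ∑' i, (1:ℝ) / (aSeq lam i) := by
    rw [← hg, ← hsum]
    exact Summable.sum_le_tsum _ (fun i _ => by positivity) (aSeq_summable hl1)
  rw [abs_lt]
  constructor <;> linarith
end

section
/- Let n_1 < n_2 < n_3 < ⋯ be a strictly increasing sequence of positive integers such that (1) every positive integer divides n_i for some index i; and let m_1 < m_2 < m_3 < ⋯ be an infinite sequence of indices such that (2) for every k, the integer n_{m_k} is divisible by n_j for all j with 1 ≤ j < m_k, and (3) for every k and every index i with m_{k−1} ≤ i < m_k (the condition m_0 ≤ i being void for k = 1), one has 1/n_i ≤ ∑_{i<j≤m_k} 1/n_j + 1/n_{m_k}. Then a rational number q is a finite sum ∑_{i∈S} 1/n_i over some finite S ⊂ ℕ if and only if 0 ≤ q < ∑_{i=1}^∞ 1/n_i (the sum interpreted as +∞ if the series diverges). -/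
/-!
Multiply by `N = n (m k)` for `k` large: every `n j` with `j ≤ m k` and the denominator of `q`
divide `N`, so the problem becomes one about the integers `a j = N / n j`. Chaining condition (3)
across the blocks gives `1 / n i ≤ ∑_{i < j ≤ m k} 1 / n j + 1 / n (m k)` for every `i < m k`, i.e.
`a i ≤ 1 + ∑_{i < j ≤ m k} a j`, and such a finite sequence represents every integer up to its total
as a subset sum, by the greedy algorithm. Conversely, a finite sum misses a positive term of the
series.
-/

open Finset
open scoped ENNReal

theorem exists_subset_Icc_sum_eq_of_le_one_add_sum (a : ℕ → ℕ) (M : ℕ)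
    (ha : ∀ i ≤ M, a i ≤ 1 + ∑ j ∈ Ioc i M, a j) (i t : ℕ) (ht : t ≤ ∑ j ∈ Icc i M, a j) :
    ∃ S ⊆ Icc i M, t = ∑ j ∈ S, a j := by
  induction hd : M + 1 - i generalizing i t with
  | zero =>
    have hempty : Icc i M = ∅ := Icc_eq_empty (by omega)
    exact ⟨∅, by simp, by simpa [hempty] using ht⟩
  | succ d ih =>
    have hiM : i ≤ M := by omega
    have htail : ∀ s ≤ ∑ j ∈ Ioc i M, a j, ∃ S ⊆ Ioc i M, s = ∑ j ∈ S, a j := by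
      simpa only [Icc_add_one_left_eq_Ioc] using fun s hs => ih (i + 1) s hs (by omega)
    rw [← Ioc_insert_left hiM] at ht ⊢
    rw [sum_insert left_notMem_Ioc] at ht
    by_cases hlt : t ≤ ∑ j ∈ Ioc i M, a j
    · obtain ⟨S, hS, rfl⟩ := htail t hlt
      exact ⟨S, hS.trans (subset_insert _ _), rfl⟩
    · -- `t` exceeds the tail, which is at least `a i - 1`, so `a i ≤ t`
      obtain ⟨S, hS, hsum⟩ := htail (t - a i) (by omega)
      have hiS : i ∉ S := fun h => left_notMem_Ioc (hS h)
      refine ⟨insert i S, insert_subset_insert _ hS, ?_⟩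
      have hai := ha i hiM
      rw [sum_insert hiS]
      omega

theorem le_sum_Ioc_add_of_blocks {α : Type*} [AddCommMonoid α] [PartialOrder α]
    [IsOrderedAddMonoid α] (f : ℕ → α) (m : ℕ → ℕ) (hm : StrictMono m)
    (h0 : ∀ i < m 0, f i ≤ ∑ j ∈ Ioc i (m 0), f j + f (m 0))
    (hsucc : ∀ k i, m k ≤ i → i < m (k + 1) →
      f i ≤ ∑ j ∈ Ioc i (m (k + 1)), f j + f (m (k + 1))) :
    ∀ k, ∀ i < m k, f i ≤ ∑ j ∈ Ioc i (m k), f j + f (m k) := by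
  intro k
  induction k with
  | zero => exact h0
  | succ k ih =>
    intro i hi
    rcases lt_or_ge i (m k) with hik | hik
    · have hk := hm k.lt_add_one
      calc f i ≤ ∑ j ∈ Ioc i (m k), f j + f (m k) := ih i hik
        _ ≤ ∑ j ∈ Ioc i (m k), f j + (∑ j ∈ Ioc (m k) (m (k + 1)), f j + f (m (k + 1))) :=
          add_le_add_right (hsucc k (m k) le_rfl hk) _
        _ = ∑ j ∈ Ioc i (m (k + 1)), f j + f (m (k + 1)) := by
          rw [← sum_Ioc_consecutive _ hik.le hk.le, add_assoc]
    · exact hsucc k i hik hi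

theorem Rat.exists_natCast_eq_mul_of_den_dvd {q : ℚ} (hq : 0 ≤ q) {N : ℕ} (h : q.den ∣ N) :
    ∃ t : ℕ, (t : ℚ) = q * N := by
  obtain ⟨c, rfl⟩ := h
  refine ⟨q.num.toNat * c, ?_⟩
  rw [Nat.cast_mul, Nat.cast_mul, ← mul_assoc, Rat.mul_den_eq_num]
  congr 1
  exact_mod_cast Int.toNat_of_nonneg (Rat.num_nonneg.mpr hq)

theorem ENNReal.sum_lt_tsum_of_ne_zero {α : Type*} [Infinite α] {f : α → ℝ≥0∞}
    (hf₀ : ∀ a, f a ≠ 0) (hf : ∀ a, f a ≠ ∞) (s : Finset α) : ∑ a ∈ s, f a < ∑' a, f a := by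
  classical
  obtain ⟨b, hb⟩ := s.exists_notMem
  calc ∑ a ∈ s, f a < ∑ a ∈ insert b s, f a := by
        rw [sum_insert hb, add_comm]
        exact ENNReal.lt_add_right (ENNReal.sum_ne_top.mpr fun a _ => hf a) (hf₀ b)
    _ ≤ ∑' a, f a := ENNReal.sum_le_tsum _

theorem ENNReal.ofReal_sum_one_div_natCast {ι : Type*} (n : ι → ℕ) (hn : ∀ i, 0 < n i)
    (s : Finset ι) :
    ENNReal.ofReal ((∑ i ∈ s, (1 : ℚ) / n i : ℚ) : ℝ) = ∑ i ∈ s, ((n i : ℝ≥0∞))⁻¹ := by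
  push_cast
  rw [ENNReal.ofReal_sum_of_nonneg fun i _ => by positivity]
  refine sum_congr rfl fun i _ => ?_
  rw [one_div, ENNReal.ofReal_inv_of_pos (by exact_mod_cast hn i), ENNReal.ofReal_natCast]

theorem exists_finset_sum_one_div_eq (n : ℕ → ℕ) (hn : ∀ i, 0 < n i) (M : ℕ)
    (hdvd : ∀ j < M, n j ∣ n M)
    (hgap : ∀ i < M, (1 : ℚ) / n i ≤ ∑ j ∈ Ioc i M, (1 : ℚ) / n j + 1 / n M)
    {q : ℚ} (hq₀ : 0 ≤ q) (hden : q.den ∣ n M) (hq : q ≤ ∑ j ∈ Icc 0 M, (1 : ℚ) / n j) :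
    ∃ S : Finset ℕ, q = ∑ j ∈ S, (1 : ℚ) / n j := by
  set N := n M
  have hN : (N : ℚ) ≠ 0 := by exact_mod_cast (hn M).ne'
  have hcast : ∀ j ≤ M, ((N / n j : ℕ) : ℚ) = N * (1 / n j) := by
    intro j hj
    have hj : n j ∣ N := by
      rcases hj.lt_or_eq with hj | rfl
      exacts [hdvd j hj, dvd_rfl]
    rw [Nat.cast_div hj (by exact_mod_cast (hn j).ne'), mul_one_div]
  have hsum : ∀ S ⊆ Icc 0 M, ((∑ j ∈ S, N / n j : ℕ) : ℚ) = N * ∑ j ∈ S, (1 : ℚ) / n j := by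
    intro S hS
    rw [Nat.cast_sum, mul_sum]
    exact sum_congr rfl fun j hj => hcast j (mem_Icc.mp (hS hj)).2
  have hgap' : ∀ i ≤ M, N / n i ≤ 1 + ∑ j ∈ Ioc i M, N / n j := by
    intro i hi
    rcases hi.lt_or_eq with hi | rfl
    · have : ((N / n i : ℕ) : ℚ) ≤ ((1 + ∑ j ∈ Ioc i M, N / n j : ℕ) : ℚ) := by
        rw [Nat.cast_add, hsum (Ioc i M) fun j hj => mem_Icc.mpr ⟨j.zero_le, (mem_Ioc.mp hj).2⟩, hcast i hi.le, Nat.cast_one]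
        calc (N : ℚ) * (1 / n i) ≤ N * (∑ j ∈ Ioc i M, (1 : ℚ) / n j + 1 / N) :=
              mul_le_mul_of_nonneg_left (hgap i hi) (Nat.cast_nonneg N)
          _ = 1 + N * ∑ j ∈ Ioc i M, (1 : ℚ) / n j := by field_simp; ring
      exact_mod_cast this
    · show n i / n i ≤ _
      rw [Nat.div_self (hn i)]
      omega
  obtain ⟨t, ht⟩ := Rat.exists_natCast_eq_mul_of_den_dvd hq₀ hden
  have ht_le : t ≤ ∑ j ∈ Icc 0 M, N / n j := by
    have : (t : ℚ) ≤ ((∑ j ∈ Icc 0 M, N / n j : ℕ) : ℚ) := by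
      rw [ht, hsum _ subset_rfl, mul_comm]
      exact mul_le_mul_of_nonneg_left hq (Nat.cast_nonneg N)
    exact_mod_cast this
  obtain ⟨S, hS, hSt⟩ := exists_subset_Icc_sum_eq_of_le_one_add_sum _ M hgap' 0 t ht_le
  refine ⟨S, mul_left_cancel₀ hN ?_⟩
  rw [← hsum S hS, ← hSt, ht, mul_comm]

theorem stmt13_general (n : ℕ → ℕ) (hpos : ∀ i, 0 < n i)
    (m : ℕ → ℕ) (hmmono : StrictMono m)
    (h1 : ∀ d : ℕ, 0 < d → ∃ i, d ∣ n i)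
    (h2 : ∀ k, ∀ j < m k, n j ∣ n (m k))
    (h3a : ∀ i < m 0,
      (1 : ℚ) / (n i) ≤ (∑ j ∈ Finset.Ioc i (m 0), (1 : ℚ) / (n j)) + 1 / (n (m 0)))
    (h3b : ∀ k i, m k ≤ i → i < m (k + 1) →
      (1 : ℚ) / (n i) ≤
        (∑ j ∈ Finset.Ioc i (m (k + 1)), (1 : ℚ) / (n j)) + 1 / (n (m (k + 1)))) :
    ∀ q : ℚ, (∃ S : Finset ℕ, q = ∑ i ∈ S, (1 : ℚ) / (n i)) ↔
      (0 ≤ q ∧ ENNReal.ofReal (q : ℝ) < ∑' i, ((n i : ℝ≥0∞))⁻¹) := by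
  intro q
  constructor
  · rintro ⟨S, rfl⟩
    refine ⟨sum_nonneg fun i _ => by positivity, ?_⟩
    rw [ENNReal.ofReal_sum_one_div_natCast n hpos]
    exact ENNReal.sum_lt_tsum_of_ne_zero (by simp) (fun i => by simpa using (hpos i).ne') S
  · rintro ⟨hq₀, hlt⟩
    obtain ⟨s, hs⟩ : ∃ s : Finset ℕ, q < ∑ i ∈ s, (1 : ℚ) / n i := by
      rw [ENNReal.tsum_eq_iSup_sum] at hlt
      obtain ⟨s, hs⟩ := lt_iSup_iff.mp hlt
      rw [← ENNReal.ofReal_sum_one_div_natCast n hpos,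
        ENNReal.ofReal_lt_ofReal_iff_of_nonneg (by exact_mod_cast hq₀)] at hs
      exact ⟨s, by exact_mod_cast hs⟩
    obtain ⟨i₀, hi₀⟩ := h1 q.den q.den_pos
    obtain ⟨K, hK⟩ := s.exists_nat_subset_range
    set k := max (i₀ + 1) K
    have hk : k ≤ m k := hmmono.le_apply
    have hsM : s ⊆ Icc 0 (m k) := fun i hi => by
      have := mem_range.mp (hK hi)
      simp only [mem_Icc]
      omega
    refine exists_finset_sum_one_div_eq n hpos (m k) (h2 k)
      (le_sum_Ioc_add_of_blocks _ m hmmono h3a h3b k) hq₀ (hi₀.trans (h2 k i₀ (by omega))) ?_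
    exact hs.le.trans (sum_le_sum_of_subset_of_nonneg hsM fun _ _ _ => by positivity)

/-- Let `n₁ < n₂ < ⋯` be positive integers such that every
positive integer divides some `n i`, and let `m₁ < m₂ < ⋯` (indexed here from
`0`) be indices such that `n (m k)` is divisible by all earlier terms, and
`1 / n i ≤ ∑_{i < j ≤ m k} 1 / n j + 1 / n (m k)` whenever
`m (k-1) ≤ i < m k` (void lower condition for the first block). Then a
rational `q` is a finite sum `∑_{i ∈ S} 1 / n i` iff `0 ≤ q < ∑_i 1 / n_i`
(the series summed in `ℝ≥0∞`, so possibly `+∞`). -/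
theorem stmt13 (n : ℕ → ℕ) (hmono : StrictMono n) (hpos : ∀ i, 0 < n i)
    (m : ℕ → ℕ) (hmmono : StrictMono m)
    (h1 : ∀ d : ℕ, 0 < d → ∃ i, d ∣ n i)
    (h2 : ∀ k, ∀ j < m k, n j ∣ n (m k))
    (h3a : ∀ i < m 0,
      (1 : ℚ) / (n i) ≤ (∑ j ∈ Finset.Ioc i (m 0), (1 : ℚ) / (n j)) + 1 / (n (m 0)))
    (h3b : ∀ k i, m k ≤ i → i < m (k + 1) →
      (1 : ℚ) / (n i) ≤
        (∑ j ∈ Finset.Ioc i (m (k + 1)), (1 : ℚ) / (n j)) + 1 / (n (m (k + 1)))) :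
    ∀ q : ℚ, (∃ S : Finset ℕ, q = ∑ i ∈ S, (1 : ℚ) / (n i)) ↔
      (0 ≤ q ∧ ENNReal.ofReal (q : ℝ) < ∑' i, ((n i : ℝ≥0∞))⁻¹) :=
  stmt13_general n hpos m hmmono h1 h2 h3a h3b
end
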